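/- arXiv:1608.03397 — 3 statements merged into one kernel-verified Lean document; each statement's English description precedes it below -/
import Mathlib

section
/- (Proposition 4) Suppose all users have the same valuation θ0 > 0, let c_H > 0, let Q1 : [0,1] → ℝ be continuous with Q(x,1) = Q1(x)+Q1(1−x), and let x* ∈ [0,1] maximize SW(x) = θ0·Q(x,1) − x·c_H over [0,1], with SW(x*) ≥ 0. Then under the side-payment mechanism g(x) = x*·c_H·(1−x)/(1−x*) (taking b = 1 and target x̂ = x*), x* is an equilibrium at which every user's payoff equals θ0·Q(x*,1) − x*·c_H = SW(x*) ≥ 0 (so individual rationality holds), and the equilibrium social welfare equals the social optimum max over x ∈ [0,1] of SW(x); i.e., for homogeneous users the side-payment mechanism achieves price of anarchy PoA_g = 1. -/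
/-!
Target the side payment at the welfare maximizer `x*`. Then each `L`-user pays exactly
`x*·c_H` and, by budget balance, each `H`-user receives `(1 - x*)·c_H`, so both paths yield
`θ0·Q(x*) - x*·c_H = SW(x*)` and no user gains by switching. The maximizer satisfies `x* < 1`
because `SW(1) = SW(0) - c_H`, so the payment is well defined; at `x* = 0` the `H`-path simply
costs `c_H` more than the `L`-path.
-/

open Set

noncomputable def sidePayment (xh c x : ℝ) : ℝ := xh * c * (1 - x) / (1 - xh)

lemma sidePayment_self {xh : ℝ} (c : ℝ) (h : xh ≠ 1) : sidePayment xh c xh = xh * c := by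
  have : 1 - xh ≠ 0 := sub_ne_zero.mpr (Ne.symm h)
  simp only [sidePayment]
  field_simp

lemma refund_sidePayment_self {xh : ℝ} (c : ℝ) (h0 : xh ≠ 0) (h1 : xh ≠ 1) :
    (1 - xh) / xh * sidePayment xh c xh = (1 - xh) * c := by
  rw [sidePayment_self c h1]
  field_simp

lemma lt_one_of_apply_one_lt_apply_zero {f : ℝ → ℝ} {xs : ℝ} (hxs : xs ∈ Icc (0 : ℝ) 1)
    (hmax : ∀ x ∈ Icc (0 : ℝ) 1, f x ≤ f xs) (h : f 1 < f 0) : xs < 1 := by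
  refine lt_of_le_of_ne hxs.2 ?_
  rintro rfl
  linarith [hmax 0 ⟨le_rfl, zero_le_one⟩]

theorem stmt_6_general (θ0 cH : ℝ) (hc : 0 < cH) (Q1 : ℝ → ℝ)
    (xs : ℝ) (hxs : xs ∈ Set.Icc (0 : ℝ) 1)
    (hmax : ∀ x ∈ Set.Icc (0 : ℝ) 1,
      θ0 * (Q1 x + Q1 (1 - x)) - x * cH ≤ θ0 * (Q1 xs + Q1 (1 - xs)) - xs * cH)
    (hIR : 0 ≤ θ0 * (Q1 xs + Q1 (1 - xs)) - xs * cH) :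
    let Q : ℝ → ℝ := fun x => Q1 x + Q1 (1 - x)
    let SW : ℝ → ℝ := fun x => θ0 * Q x - x * cH
    let g : ℝ → ℝ := fun x => xs * cH * (1 - x) / (1 - xs)
    let uL : ℝ → ℝ := fun x => θ0 * Q x - g x
    let uH : ℝ → ℝ := fun x => θ0 * Q x - cH + ((1 - x) / x) * g x
    ((0 < xs → uL xs ≤ uH xs) ∧ (xs < 1 → uH xs ≤ uL xs)) ∧
    uL xs = SW xs ∧ (0 < xs → uH xs = SW xs) ∧ 0 ≤ SW xs ∧
    IsGreatest (SW '' Set.Icc 0 1) (SW xs) := by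
  intro Q SW g uL uH
  have hxs1 : xs < 1 := lt_one_of_apply_one_lt_apply_zero (f := SW) hxs hmax <| by
    simp only [SW, Q, sub_self, sub_zero, one_mul, zero_mul]
    linarith
  have hL : uL xs = SW xs := by
    simp only [uL, SW, g]
    rw [← sidePayment, sidePayment_self cH hxs1.ne]
  have hH (hpos : 0 < xs) : uH xs = SW xs := by
    simp only [uH, SW, g]
    rw [← sidePayment, refund_sidePayment_self cH hpos.ne' hxs1.ne]
    ring
  have hH0 (h0 : xs = 0) : uH xs = uL xs - cH := by
    simp [uH, uL, g, h0]
  refine ⟨⟨fun hpos => (hL.trans (hH hpos).symm).le, fun _ => ?_⟩, hL, hH, hIR,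
    ⟨mem_image_of_mem SW hxs, forall_mem_image.mpr hmax⟩⟩
  rcases hxs.1.eq_or_lt with h0 | hpos
  · linarith [hH0 h0.symm]
  · exact ((hH hpos).trans hL.symm).le

/-- Proposition 4: For homogeneous users of valuation `θ0 > 0`,
with `Q(x) = Q1(x)+Q1(1−x)` (`Q1` continuous), a maximizer `x*` of
`SW(x) = θ0·Q(x) − x·c_H` over `[0,1]` with `SW(x*) ≥ 0`, the side-payment
mechanism `g(x) = x*·c_H·(1−x)/(1−x*)` makes `x*` an equilibrium at which every
user's payoff equals `SW(x*) ≥ 0` (individual rationality), and the equilibrium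
welfare is the social optimum; i.e. `PoA_g = 1`. -/
theorem stmt_6 (θ0 cH : ℝ) (hθ : 0 < θ0) (hc : 0 < cH) (Q1 : ℝ → ℝ)
    (hcont : ContinuousOn Q1 (Set.Icc 0 1)) (xs : ℝ) (hxs : xs ∈ Set.Icc (0 : ℝ) 1)
    (hmax : ∀ x ∈ Set.Icc (0 : ℝ) 1,
      θ0 * (Q1 x + Q1 (1 - x)) - x * cH ≤ θ0 * (Q1 xs + Q1 (1 - xs)) - xs * cH)
    (hIR : 0 ≤ θ0 * (Q1 xs + Q1 (1 - xs)) - xs * cH) :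
    let Q : ℝ → ℝ := fun x => Q1 x + Q1 (1 - x)
    let SW : ℝ → ℝ := fun x => θ0 * Q x - x * cH
    let g : ℝ → ℝ := fun x => xs * cH * (1 - x) / (1 - xs)
    let uL : ℝ → ℝ := fun x => θ0 * Q x - g x
    let uH : ℝ → ℝ := fun x => θ0 * Q x - cH + ((1 - x) / x) * g x
    ((0 < xs → uL xs ≤ uH xs) ∧ (xs < 1 → uH xs ≤ uL xs)) ∧
    uL xs = SW xs ∧ (0 < xs → uH xs = SW xs) ∧ 0 ≤ SW xs ∧
    IsGreatest (SW '' Set.Icc 0 1) (SW xs) :=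
  stmt_6_general θ0 cH hc Q1 xs hxs hmax hIR
end

section
/- (Theorem 2, equilibrium structure) Let θ0 > 0, c_H > 0, a ∈ [0,1), let Q1 : [0,1] → ℝ be continuous, nondecreasing and concave with Q1(0) ≥ 0, and set Q(x) = Q1(x)+Q1(1−x), Q̲ = Q(0), Q̄ = Q(1/2). Under content restriction with coefficient a, payoffs are u_a(L,x) = a·θ0·Q(x) and u_a(H,x) = θ0·Q(x) − c_H. Then: (i) any equilibrium x̂ ∈ (0,1) satisfies (1−a)·θ0·Q(x̂) = c_H; (ii) if (1−a)·θ0·Q̲ > c_H, then u_a(H,x) > u_a(L,x) for every x ∈ [0,1], so x̂ = 1 is the unique equilibrium; (iii) if (1−a)·θ0·Q̄ ≤ c_H, then x̂ = 0 is an equilibrium; (iv) if Q̲ ≤ c_H/((1−a)·θ0) ≤ Q̄, then there exists x̂ ∈ [1/2, 1] with (1−a)·θ0·Q(x̂) = c_H, which is an equilibrium. -/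
/-!
Since `Q1` is concave, `Q(x) = Q1(x) + Q1(1 - x)` is concave and symmetric about `1/2`, so it is
minimal at the endpoints: `Q(0) = Q(1) ≤ Q(x)`. The payoff gap `u(H,x) - u(L,x)` equals
`(1 - a)·θ0·Q(x) - c_H`, so it vanishes at interior equilibria, is positive everywhere once it is
positive at `0`, and, by the intermediate value theorem on `[1/2, 1]`, has a zero there whenever
`c_H / ((1 - a)·θ0)` lies between `Q(0)` and `Q(1/2)`.
-/

open Set

def totalContent (Q1 : ℝ → ℝ) (x : ℝ) : ℝ := Q1 x + Q1 (1 - x)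

section TotalContent

variable {Q1 : ℝ → ℝ}

theorem totalContent_one (Q1 : ℝ → ℝ) : totalContent Q1 1 = totalContent Q1 0 := by
  simp only [totalContent, sub_self, sub_zero, add_comm]

theorem ContinuousOn.totalContent (hQ1 : ContinuousOn Q1 (Icc 0 1)) :
    ContinuousOn (totalContent Q1) (Icc 0 1) := by
  refine hQ1.add (hQ1.comp (continuousOn_const.sub continuousOn_id) fun x hx => ?_)
  exact ⟨by linarith [hx.2], by linarith [hx.1]⟩

theorem ConcaveOn.totalContent_zero_le (hQ1 : ConcaveOn ℝ (Icc 0 1) Q1) {x : ℝ}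
    (hx : x ∈ Icc 0 1) : totalContent Q1 0 ≤ totalContent Q1 x := by
  obtain ⟨hx0, hx1⟩ := hx
  have h0 : (0 : ℝ) ∈ Icc 0 1 := ⟨le_rfl, zero_le_one⟩
  have h1 : (1 : ℝ) ∈ Icc 0 1 := ⟨zero_le_one, le_rfl⟩
  have hleft := hQ1.2 h0 h1 (sub_nonneg.2 hx1) hx0 (sub_add_cancel 1 x)
  have hright := hQ1.2 h0 h1 hx0 (sub_nonneg.2 hx1) (add_sub_cancel x 1)
  simp only [smul_eq_mul, mul_zero, mul_one, zero_add] at hleft hright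
  simp only [totalContent, sub_zero]
  nlinarith

theorem exists_mem_Icc_totalContent_eq (hQ1 : ContinuousOn Q1 (Icc 0 1)) {c : ℝ}
    (hc : c ∈ Icc (totalContent Q1 0) (totalContent Q1 (1 / 2))) :
    ∃ x ∈ Icc (1 / 2 : ℝ) 1, totalContent Q1 x = c := by
  have hsub : Icc (1 / 2 : ℝ) 1 ⊆ Icc 0 1 := Icc_subset_Icc (by norm_num) le_rfl
  rw [← totalContent_one] at hc
  exact intermediate_value_Icc' (by norm_num) (hQ1.totalContent.mono hsub) hc

end TotalContent

def IsEquilibrium (uL uH : ℝ → ℝ) (x : ℝ) : Prop :=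
  x ∈ Icc (0 : ℝ) 1 ∧ (0 < x → uL x ≤ uH x) ∧ (x < 1 → uH x ≤ uL x)

section IsEquilibrium

variable {uL uH : ℝ → ℝ} {x : ℝ}

theorem IsEquilibrium.eq_of_mem_Ioo (he : IsEquilibrium uL uH x) (hx : x ∈ Ioo 0 1) :
    uL x = uH x :=
  le_antisymm (he.2.1 hx.1) (he.2.2 hx.2)

theorem isEquilibrium_of_eq (hx : x ∈ Icc 0 1) (h : uL x = uH x) : IsEquilibrium uL uH x :=
  ⟨hx, fun _ => h.le, fun _ => h.ge⟩

theorem isEquilibrium_zero (h : uH 0 ≤ uL 0) : IsEquilibrium uL uH 0 :=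
  ⟨⟨le_rfl, zero_le_one⟩, fun h0 => absurd h0 (lt_irrefl 0), fun _ => h⟩

theorem isEquilibrium_one (h : uL 1 ≤ uH 1) : IsEquilibrium uL uH 1 :=
  ⟨⟨zero_le_one, le_rfl⟩, fun _ => h, fun h1 => absurd h1 (lt_irrefl 1)⟩

theorem IsEquilibrium.eq_one_of_forall_lt (he : IsEquilibrium uL uH x)
    (h : ∀ y ∈ Icc (0 : ℝ) 1, uL y < uH y) : x = 1 := by
  by_contra hx1
  exact (he.2.2 (lt_of_le_of_ne he.1.2 hx1)).not_gt (h x he.1)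

end IsEquilibrium

theorem stmt_10_general (θ0 cH a : ℝ) (hθ : 0 < θ0)
    (ha : a ∈ Set.Ico (0 : ℝ) 1) (Q1 : ℝ → ℝ)
    (hcont : ContinuousOn Q1 (Set.Icc 0 1))
    (hconc : ConcaveOn ℝ (Set.Icc 0 1) Q1) :
    let Q : ℝ → ℝ := fun x => Q1 x + Q1 (1 - x)
    let uL : ℝ → ℝ := fun x => a * θ0 * Q x
    let uH : ℝ → ℝ := fun x => θ0 * Q x - cH
    let eqm : ℝ → Prop := fun x => x ∈ Set.Icc (0 : ℝ) 1 ∧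
      (0 < x → uL x ≤ uH x) ∧ (x < 1 → uH x ≤ uL x)
    (∀ x ∈ Set.Ioo (0 : ℝ) 1, eqm x → (1 - a) * θ0 * Q x = cH) ∧
    (cH < (1 - a) * θ0 * Q 0 →
      (∀ x ∈ Set.Icc (0 : ℝ) 1, uL x < uH x) ∧ eqm 1 ∧ ∀ x, eqm x → x = 1) ∧
    ((1 - a) * θ0 * Q (1 / 2) ≤ cH → eqm 0) ∧
    (Q 0 ≤ cH / ((1 - a) * θ0) → cH / ((1 - a) * θ0) ≤ Q (1 / 2) →
      ∃ x ∈ Set.Icc (1 / 2 : ℝ) 1, (1 - a) * θ0 * Q x = cH ∧ eqm x) := by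
  intro Q uL uH eqm
  have hk : 0 < (1 - a) * θ0 := mul_pos (sub_pos.2 ha.2) hθ
  have hgap (x : ℝ) : uH x - uL x = (1 - a) * θ0 * Q x - cH := by
    show θ0 * Q x - cH - a * θ0 * Q x = _
    ring
  have hQ0 (x : ℝ) (hx : x ∈ Icc 0 1) : (1 - a) * θ0 * Q 0 ≤ (1 - a) * θ0 * Q x :=
    mul_le_mul_of_nonneg_left (hconc.totalContent_zero_le hx) hk.le
  refine ⟨fun x hx he => ?_, fun hdom => ?_, fun hmid => ?_, fun hlow hhigh => ?_⟩
  · linarith [IsEquilibrium.eq_of_mem_Ioo he hx, hgap x]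
  · have hdomH (x : ℝ) (hx : x ∈ Icc 0 1) : uL x < uH x := by linarith [hgap x, hQ0 x hx]
    exact ⟨hdomH, isEquilibrium_one (hdomH 1 ⟨zero_le_one, le_rfl⟩).le,
      fun x he => IsEquilibrium.eq_one_of_forall_lt he hdomH⟩
  · have hhalf := hQ0 (1 / 2) ⟨by norm_num, by norm_num⟩
    exact isEquilibrium_zero (by linarith [hgap 0])
  · obtain ⟨x, hx, hQx⟩ := exists_mem_Icc_totalContent_eq hcont ⟨hlow, hhigh⟩
    have hpay : (1 - a) * θ0 * Q x = cH := by
      rw [show Q x = _ from hQx, mul_div_cancel₀ _ hk.ne']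
    refine ⟨x, hx, hpay, isEquilibrium_of_eq ⟨by linarith [hx.1], hx.2⟩ ?_⟩
    linarith [hgap x]

/-- Theorem 2, equilibrium structure: Under content restriction
with coefficient `a ∈ [0,1)`, payoffs `u_a(L,x) = a·θ0·Q(x)` and
`u_a(H,x) = θ0·Q(x) − c_H` where `Q(x) = Q1(x)+Q1(1−x)` with `Q1` continuous,
nondecreasing, concave, `Q1(0) ≥ 0`: (i) any interior equilibrium satisfies
`(1−a)·θ0·Q(x̂) = c_H`; (ii) if `(1−a)·θ0·Q(0) > c_H` then `H` strictly
dominates everywhere and `x̂ = 1` is the unique equilibrium; (iii) if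
`(1−a)·θ0·Q(1/2) ≤ c_H` then `x̂ = 0` is an equilibrium; (iv) if
`Q(0) ≤ c_H/((1−a)θ0) ≤ Q(1/2)` there is an equilibrium `x̂ ∈ [1/2,1]` with
`(1−a)·θ0·Q(x̂) = c_H`. -/
theorem stmt_10 (θ0 cH a : ℝ) (hθ : 0 < θ0) (hc : 0 < cH)
    (ha : a ∈ Set.Ico (0 : ℝ) 1) (Q1 : ℝ → ℝ)
    (hcont : ContinuousOn Q1 (Set.Icc 0 1))
    (hmono : MonotoneOn Q1 (Set.Icc 0 1))
    (hconc : ConcaveOn ℝ (Set.Icc 0 1) Q1) (h0 : 0 ≤ Q1 0) :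
    let Q : ℝ → ℝ := fun x => Q1 x + Q1 (1 - x)
    let uL : ℝ → ℝ := fun x => a * θ0 * Q x
    let uH : ℝ → ℝ := fun x => θ0 * Q x - cH
    let eqm : ℝ → Prop := fun x => x ∈ Set.Icc (0 : ℝ) 1 ∧
      (0 < x → uL x ≤ uH x) ∧ (x < 1 → uH x ≤ uL x)
    (∀ x ∈ Set.Ioo (0 : ℝ) 1, eqm x → (1 - a) * θ0 * Q x = cH) ∧
    (cH < (1 - a) * θ0 * Q 0 →
      (∀ x ∈ Set.Icc (0 : ℝ) 1, uL x < uH x) ∧ eqm 1 ∧ ∀ x, eqm x → x = 1) ∧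
    ((1 - a) * θ0 * Q (1 / 2) ≤ cH → eqm 0) ∧
    (Q 0 ≤ cH / ((1 - a) * θ0) → cH / ((1 - a) * θ0) ≤ Q (1 / 2) →
      ∃ x ∈ Set.Icc (1 / 2 : ℝ) 1, (1 - a) * θ0 * Q x = cH ∧ eqm x) :=
  stmt_10_general θ0 cH a hθ ha Q1 hcont hconc
end

section
/- (Claim in the proof of Theorem 2) Let θ0 > 0, c_H > 0, let Q1 : [0,1] → ℝ be nondecreasing and concave with Q1(0) ≥ 0, and set Q(x) = Q1(x)+Q1(1−x). For every content-restriction coefficient a ∈ [0,1], there exists an equilibrium x̂ ∈ {0,1} of the a-restricted game whose social welfare is at most θ0·Q(0): specifically, if (1−a)·θ0·Q(0) ≤ c_H then x̂ = 0 is an equilibrium with welfare a·θ0·Q(0) ≤ θ0·Q(0), and if (1−a)·θ0·Q(0) > c_H then x̂ = 1 is an equilibrium with welfare θ0·Q(0) − c_H < θ0·Q(0). Hence the maximum over a ∈ [0,1] of the worst-equilibrium welfare equals θ0·Q(0), attained at a = 1. -/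
/-!
At `x = 0` and `x = 1` the equilibrium conditions collapse to a single comparison of
`(1 - a) θ0 Q(0)` with `c_H`, because `Q` is symmetric about `1/2`; so one of the two corners
is always an equilibrium. Their welfares are `a θ0 Q(0)` and `θ0 Q(0) - c_H`, both at most
`θ0 Q(0)` since `Q(0) ≥ 0`. For `a = 1` the high path is never strictly better, which forces
`x̂ = 0`.
-/

namespace ContentRouting

variable (θ0 cH : ℝ) (Q : ℝ → ℝ) {a x : ℝ}

def IsEquilibrium (a x : ℝ) : Prop :=
  x ∈ Set.Icc (0 : ℝ) 1 ∧
    (0 < x → a * θ0 * Q x ≤ θ0 * Q x - cH) ∧ (x < 1 → θ0 * Q x - cH ≤ a * θ0 * Q x)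

def welfare (a x : ℝ) : ℝ :=
  (1 - x) * (a * θ0 * Q x) + x * (θ0 * Q x - cH)

theorem isEquilibrium_zero_iff : IsEquilibrium θ0 cH Q a 0 ↔ (1 - a) * θ0 * Q 0 ≤ cH := by
  refine ⟨fun ⟨_, _, hL⟩ => by linarith [hL one_pos], fun h => ⟨?_, ?_, fun _ => ?_⟩⟩
  · exact ⟨le_rfl, zero_le_one⟩
  · exact fun h => absurd h (lt_irrefl 0)
  · linarith

theorem isEquilibrium_one_iff : IsEquilibrium θ0 cH Q a 1 ↔ cH ≤ (1 - a) * θ0 * Q 1 := by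
  refine ⟨fun ⟨_, hH, _⟩ => by linarith [hH one_pos], fun h => ⟨?_, fun _ => ?_, ?_⟩⟩
  · exact ⟨zero_le_one, le_rfl⟩
  · linarith
  · exact fun h => absurd h (lt_irrefl 1)

theorem eq_zero_of_isEquilibrium_one (hc : 0 < cH) (hx : IsEquilibrium θ0 cH Q 1 x) :
    x = 0 := by
  obtain ⟨⟨hx0, _⟩, hH, _⟩ := hx
  refine le_antisymm (not_lt.1 fun hpos => ?_) hx0
  linarith [hH hpos]

theorem welfare_zero : welfare θ0 cH Q a 0 = a * θ0 * Q 0 := by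
  simp [welfare]

theorem welfare_one : welfare θ0 cH Q a 1 = θ0 * Q 1 - cH := by
  simp [welfare]

end ContentRouting

open ContentRouting

theorem stmt_11_general (θ0 cH : ℝ) (hθ : 0 < θ0) (hc : 0 < cH) (Q1 : ℝ → ℝ)
    (hmono : MonotoneOn Q1 (Set.Icc 0 1))
    (h0 : 0 ≤ Q1 0) :
    let Q : ℝ → ℝ := fun x => Q1 x + Q1 (1 - x)
    let eqm : ℝ → ℝ → Prop := fun a x => x ∈ Set.Icc (0 : ℝ) 1 ∧
      (0 < x → a * θ0 * Q x ≤ θ0 * Q x - cH) ∧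
      (x < 1 → θ0 * Q x - cH ≤ a * θ0 * Q x)
    let W : ℝ → ℝ → ℝ := fun a x => (1 - x) * (a * θ0 * Q x) + x * (θ0 * Q x - cH)
    (∀ a ∈ Set.Icc (0 : ℝ) 1,
      ((1 - a) * θ0 * Q 0 ≤ cH → eqm a 0 ∧ W a 0 ≤ θ0 * Q 0) ∧
      (cH < (1 - a) * θ0 * Q 0 → eqm a 1 ∧ W a 1 < θ0 * Q 0)) ∧
    eqm 1 0 ∧ (∀ x, eqm 1 x → x = 0) ∧ W 1 0 = θ0 * Q 0 := by
  intro Q eqm W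
  have hQ_one : Q 1 = Q 0 := by simp only [Q, sub_self, sub_zero, add_comm]
  have hθQ_nonneg : 0 ≤ θ0 * Q 0 := by
    have hQ1_le : Q1 0 ≤ Q1 1 := hmono ⟨le_rfl, zero_le_one⟩ ⟨zero_le_one, le_rfl⟩ zero_le_one
    exact mul_nonneg hθ.le (by simp only [Q, sub_zero]; linarith)
  refine ⟨fun a ⟨_, ha1⟩ => ⟨fun h => ⟨(isEquilibrium_zero_iff θ0 cH Q).2 h, ?_⟩,
    fun h => ⟨(isEquilibrium_one_iff θ0 cH Q).2 (hQ_one ▸ h.le), ?_⟩⟩,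
    (isEquilibrium_zero_iff θ0 cH Q).2 (by simpa using hc.le),
    fun _ => eq_zero_of_isEquilibrium_one θ0 cH Q hc, ?_⟩
  · refine (welfare_zero θ0 cH Q).trans_le ?_
    rw [mul_assoc]
    exact mul_le_of_le_one_left hθQ_nonneg ha1
  · exact (welfare_one θ0 cH Q).trans_lt (by rw [hQ_one]; linarith)
  · exact (welfare_zero θ0 cH Q).trans (by rw [one_mul])

/-- Claim in the proof of Theorem 2: For every
content-restriction coefficient `a ∈ [0,1]` there is an equilibrium in `{0,1}`
whose social welfare is at most `θ0·Q(0)`: if `(1−a)·θ0·Q(0) ≤ c_H` then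
`x̂ = 0` is an equilibrium with welfare `a·θ0·Q(0) ≤ θ0·Q(0)`, otherwise
`x̂ = 1` is an equilibrium with welfare `θ0·Q(0) − c_H < θ0·Q(0)`. Hence the
max over `a` of the worst-equilibrium welfare is `θ0·Q(0)`, attained at
`a = 1` (whose unique equilibrium is `0` with welfare exactly `θ0·Q(0)`). -/
theorem stmt_11 (θ0 cH : ℝ) (hθ : 0 < θ0) (hc : 0 < cH) (Q1 : ℝ → ℝ)
    (hmono : MonotoneOn Q1 (Set.Icc 0 1))
    (hconc : ConcaveOn ℝ (Set.Icc 0 1) Q1) (h0 : 0 ≤ Q1 0) :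
    let Q : ℝ → ℝ := fun x => Q1 x + Q1 (1 - x)
    let eqm : ℝ → ℝ → Prop := fun a x => x ∈ Set.Icc (0 : ℝ) 1 ∧
      (0 < x → a * θ0 * Q x ≤ θ0 * Q x - cH) ∧
      (x < 1 → θ0 * Q x - cH ≤ a * θ0 * Q x)
    let W : ℝ → ℝ → ℝ := fun a x => (1 - x) * (a * θ0 * Q x) + x * (θ0 * Q x - cH)
    (∀ a ∈ Set.Icc (0 : ℝ) 1,
      ((1 - a) * θ0 * Q 0 ≤ cH → eqm a 0 ∧ W a 0 ≤ θ0 * Q 0) ∧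
      (cH < (1 - a) * θ0 * Q 0 → eqm a 1 ∧ W a 1 < θ0 * Q 0)) ∧
    eqm 1 0 ∧ (∀ x, eqm 1 x → x = 0) ∧ W 1 0 = θ0 * Q 0 :=
  stmt_11_general θ0 cH hθ hc Q1 hmono h0
end
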